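/- arXiv:2511.00882 — 2 statements merged into one kernel-verified Lean document; each statement's English description precedes it below -/
import Mathlib

section
/- For every integer k with 2 ≤ k ≤ r, the following recursion holds in W: ϖ_k = ϖ_{k-1} · (r_{k-1} r_{k-2} ⋯ r_2 r_1) · ϖ_1 · (r_1 r_2 ⋯ r_{k-1}), where ϖ_1 = r_0 r_1 ⋯ r_{r-1} r_r r_{r-1} ⋯ r_1. -/
noncomputable section

open CoxeterSystem
open Fin.NatCast

/-- The Coxeter matrix of the affine Weyl group of type `Ã_{2r}`:
vertices `0, …, 2r` arranged in a cycle mod `N = 2r+1`; `m i j = 3` if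
`i - j ≡ ±1 (mod N)`, `m i j = 2` for other off-diagonal pairs. -/
def affACoxeterMatrix (r : ℕ) : CoxeterMatrix (Fin (2 * r + 1)) where
  M i j := if i = j then 1 else if i = j + 1 ∨ j = i + 1 then 3 else 2
  isSymm := by
    apply Matrix.IsSymm.ext
    intro i j
    by_cases h : j = i
    · subst h; rfl
    · rw [if_neg h, if_neg (fun hh : i = j => h hh.symm)]
      exact if_congr or_comm rfl rfl
  diagonal i := if_pos rfl
  off_diagonal i j h := by
    rw [if_neg h]
    split <;> omega

/-- The affine Weyl group `W` of type `Ã_{2r}`, as the Coxeter group of the above matrix. -/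
abbrev AffW (r : ℕ) : Type := (affACoxeterMatrix r).Group

/-- The canonical Coxeter system on `AffW r`. -/
def affCS (r : ℕ) : CoxeterSystem (affACoxeterMatrix r) (AffW r) :=
  (affACoxeterMatrix r).toCoxeterSystem

/-- The simple reflection `s i` (index taken mod `2r+1`). -/
def sgen (r i : ℕ) : AffW r := (affCS r).simple ((i : ℕ) : Fin (2 * r + 1))

/-- The word in the simple reflections representing the generator `r_i` of the
relative Weyl group: `r_0 = s_0`, `r_i = s_i s_{2r+1-i}` for `1 ≤ i ≤ r-1`,
`r_r = s_r s_{r+1} s_r`. -/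
def rword (r : ℕ) : ℕ → List (Fin (2 * r + 1)) := fun i =>
  if i = 0 then [(0 : Fin (2 * r + 1))]
  else if i < r then [((i : ℕ) : Fin (2 * r + 1)), ((2 * r + 1 - i : ℕ) : Fin (2 * r + 1))]
  else [((r : ℕ) : Fin (2 * r + 1)), ((r + 1 : ℕ) : Fin (2 * r + 1)), ((r : ℕ) : Fin (2 * r + 1))]

/-- The element `r_i` of `W`. -/
def rgen (r i : ℕ) : AffW r := (affCS r).wordProd (rword r i)

/-- The list `[a, a+1, …, b]` (empty if `b < a`). -/
def ascSeq (a b : ℕ) : List ℕ := List.range' a (b + 1 - a)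

/-- The list `[b, b-1, …, a]` (empty if `b < a`). -/
def descSeq (a b : ℕ) : List ℕ := (List.range' a (b + 1 - a)).reverse

/-- The expansion, as a word in the simple reflections, of the block
`r_0 r_1 ⋯ r_{r-1} r_r r_{r-1} ⋯ r_k`. -/
def blockWord (r k : ℕ) : List (Fin (2 * r + 1)) :=
  ((ascSeq 0 r ++ descSeq k (r - 1)).map (rword r)).flatten

/-- The element `r_0 r_1 ⋯ r_{r-1} r_r r_{r-1} ⋯ r_k` of `W`. -/
def blockEl (r k : ℕ) : AffW r := (affCS r).wordProd (blockWord r k)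

/-- The expansion, as a word in the simple reflections, of
`ϖ_k = (r_0 r_1 ⋯ r_{r-1} r_r r_{r-1} ⋯ r_k)^k`. -/
def piWord (r k : ℕ) : List (Fin (2 * r + 1)) :=
  (List.replicate k (blockWord r k)).flatten

/-- The element `ϖ_k = (r_0 r_1 ⋯ r_{r-1} r_r r_{r-1} ⋯ r_k)^k` of `W`. -/
def piEl (r k : ℕ) : AffW r := (affCS r).wordProd (piWord r k)

/-- The expansion of the full block `r_0 r_1 ⋯ r_{r-1} r_r` as a word. -/
def fullBlockWord (r : ℕ) : List (Fin (2 * r + 1)) :=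
  ((ascSeq 0 r).map (rword r)).flatten

/-- The element `r_0 r_1 ⋯ r_{r-1} r_r` of `W`. -/
def fullBlockEl (r : ℕ) : AffW r := (affCS r).wordProd (fullBlockWord r)

/-!
Write `B` for the block `r_0 r_1 ⋯ r_r r_{r-1} ⋯ r_k`, so that `ϖ_k = B^k`, the block of
`ϖ_{k-1}` is `B r_{k-1}`, and that of `ϖ_1` is `B r_{k-1} ⋯ r_1`. The `r_i` with `1 ≤ i < r` are
involutions satisfying the braid relations of type `A`, and `r_i, r_j` commute when
`|i - j| ≥ 2`; hence `B r_j = r_{j+1} B` for `1 ≤ j ≤ k - 2`. Pushing `B` through,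
`(B r_{k-1})^{k-1} = B^{k-1} r_1 ⋯ r_{k-1}`, and the right-hand side collapses to `B^k`.
-/

theorem Fin.natCast_eq_natCast_iff_of_le {n a b : ℕ} (ha : a ≤ n) (hb : b ≤ n) :
    (a : Fin (n + 1)) = b ↔ a = b := by
  simp [Fin.ext_iff, Fin.val_natCast, Nat.mod_eq_of_lt (Nat.lt_succ_of_le ha),
    Nat.mod_eq_of_lt (Nat.lt_succ_of_le hb)]

theorem Fin.natCast_eq_natCast_add_one_iff {n a b : ℕ} (ha : a ≤ n) (hb : b ≤ n) :
    (a : Fin (n + 1)) = b + 1 ↔ a = b + 1 ∨ a = 0 ∧ b = n := by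
  rw [Fin.ext_iff, Fin.val_add_one]
  simp only [Fin.ext_iff, Fin.val_natCast, Fin.val_last, Nat.mod_eq_of_lt (Nat.lt_succ_of_le ha),
    Nat.mod_eq_of_lt (Nat.lt_succ_of_le hb)]
  split_ifs <;> omega

namespace CoxeterSystem

variable {B W : Type*} [Group W] {M : CoxeterMatrix B} (cs : CoxeterSystem M W)

theorem commute_simple_of_M_eq_two {i i' : B} (h : M i i' = 2) :
    Commute (cs.simple i) (cs.simple i') := by
  have := cs.wordProd_braidWord_eq i i'
  rw [braidWord, braidWord, M.symmetric i' i, h] at this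
  simpa [alternatingWord, wordProd, commute_iff_eq] using this

theorem simple_braid_of_M_eq_three {i i' : B} (h : M i i' = 3) :
    cs.simple i * cs.simple i' * cs.simple i = cs.simple i' * cs.simple i * cs.simple i' := by
  have := cs.wordProd_braidWord_eq i' i
  rw [braidWord, braidWord, M.symmetric i' i, h] at this
  simpa [alternatingWord, wordProd, mul_assoc] using this

end CoxeterSystem

section Monoid

variable {M : Type*} [Monoid M]

theorem braid_mul_of_commute {a b c d : M} (hab : Commute a b) (hcd : Commute c d)
    (had : Commute a d) (hbc : Commute b c) (hac : a * c * a = c * a * c)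
    (hbd : b * d * b = d * b * d) :
    a * b * (c * d) * (a * b) = c * d * (a * b) * (c * d) :=
  calc a * b * (c * d) * (a * b) = a * c * a * (b * d * b) := by
        simp only [mul_assoc]; rw [hbc.left_comm, had.symm.left_comm, hab.symm.left_comm]
    _ = c * a * c * (d * b * d) := by rw [hac, hbd]
    _ = c * d * (a * b) * (c * d) := by
        simp only [mul_assoc]; rw [had.symm.left_comm, hbc.left_comm, hcd.symm.left_comm]

theorem semiconjBy_of_braid {p q u v : M} (hp : Commute p v) (hq : Commute q u)
    (huv : u * v * u = v * u * v) : SemiconjBy (p * (u * (v * q))) u v := by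
  have huvq : u * (v * (u * q)) = v * (u * (v * q)) := by simp only [← mul_assoc, huv]
  calc p * (u * (v * q)) * u = p * (u * (v * (u * q))) := by simp only [mul_assoc, hq.eq]
    _ = v * (p * (u * (v * q))) := by rw [huvq, hp.left_comm]

theorem SemiconjBy.list_prod_map_range' {b : M} {x : ℕ → M} {n m : ℕ}
    (h : ∀ j, n ≤ j → j < m + n → SemiconjBy b (x j) (x (j + 1))) :
    SemiconjBy b ((List.range' n m).map x).prod ((List.range' (n + 1) m).map x).prod := by
  induction m generalizing n with
  | zero => exact SemiconjBy.one_right b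
  | succ m ih =>
    simp only [List.range'_succ, List.map_cons, List.prod_cons]
    exact (h n le_rfl (by omega)).mul_right (ih fun j h1 h2 => h j (by omega) (by omega))

theorem mul_pow_succ_eq_pow_mul_prod_range' {b : M} {x : ℕ → M} {n m : ℕ}
    (h : ∀ j, n ≤ j → j < m + n → SemiconjBy b (x j) (x (j + 1))) :
    (b * x (m + n)) ^ (m + 1) = b ^ (m + 1) * ((List.range' n (m + 1)).map x).prod := by
  induction m generalizing n with
  | zero => simp
  | succ m ih =>
    have hshift := SemiconjBy.list_prod_map_range' h
    calc (b * x (m + 1 + n)) ^ (m + 2)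
        = (b * x (m + (n + 1))) ^ (m + 1) * (b * x (m + 1 + n)) := by
          rw [pow_succ, Nat.add_right_comm, Nat.add_assoc]
      _ = b ^ (m + 1) * (((List.range' (n + 1) (m + 1)).map x).prod * b) * x (m + 1 + n) := by
          rw [ih fun j h1 h2 => h j (by omega) (by omega)]; simp only [mul_assoc]
      _ = b ^ (m + 2) * ((List.range' n (m + 2)).map x).prod := by
          rw [← hshift.eq, List.range'_1_concat (n := m + 1), List.map_append, List.prod_append]
          simp only [pow_succ, mul_assoc, List.map_cons, List.map_nil, List.prod_cons,
            List.prod_nil, mul_one, Nat.add_comm n]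

end Monoid

section AffineA

variable {r : ℕ}

/-- The hypothesis `hab` says that `a` and `b` are at cyclic distance at least `2`
modulo `2r+1`. -/
theorem affACoxeterMatrix_natCast_eq_two {a b : ℕ} (ha : a ≤ 2 * r) (hb : b ≤ 2 * r)
    (hab : a + 2 ≤ b ∧ b < a + 2 * r ∨ b + 2 ≤ a ∧ a < b + 2 * r) :
    affACoxeterMatrix r a b = 2 := by
  change ite _ _ (ite _ _ _) = 2
  rw [if_neg (by rw [Fin.natCast_eq_natCast_iff_of_le ha hb]; omega), if_neg (by
    rw [Fin.natCast_eq_natCast_add_one_iff ha hb, Fin.natCast_eq_natCast_add_one_iff hb ha]; omega)]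

theorem affACoxeterMatrix_natCast_succ {a : ℕ} (ha : a + 1 ≤ 2 * r) :
    affACoxeterMatrix r a (a + 1 : ℕ) = 3 := by
  change ite _ _ (ite _ _ _) = 3
  rw [if_neg (by rw [Fin.natCast_eq_natCast_iff_of_le (by omega) ha]; omega),
    if_pos (Or.inr (by push_cast; rfl))]

theorem sgen_commute {a b : ℕ} (ha : a ≤ 2 * r) (hb : b ≤ 2 * r)
    (hab : a + 2 ≤ b ∧ b < a + 2 * r ∨ b + 2 ≤ a ∧ a < b + 2 * r) :
    Commute (sgen r a) (sgen r b) :=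
  (affCS r).commute_simple_of_M_eq_two (affACoxeterMatrix_natCast_eq_two ha hb hab)

theorem sgen_braid {a : ℕ} (ha : a + 1 ≤ 2 * r) :
    sgen r a * sgen r (a + 1) * sgen r a = sgen r (a + 1) * sgen r a * sgen r (a + 1) :=
  (affCS r).simple_braid_of_M_eq_three (affACoxeterMatrix_natCast_succ ha)

end AffineA

section Relations

variable {r : ℕ}

theorem rgen_zero : rgen r 0 = sgen r 0 := by
  simp [rgen, rword, sgen]

theorem rgen_of_pos_of_lt {i : ℕ} (hi : 0 < i) (hir : i < r) :
    rgen r i = sgen r i * sgen r (2 * r + 1 - i) := by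
  simp only [rgen, rword, hi.ne', hir, if_false, if_true, CoxeterSystem.wordProd_cons,
    CoxeterSystem.wordProd_nil, mul_one]
  rfl

theorem rgen_self (hr : 0 < r) : rgen r r = sgen r r * sgen r (r + 1) * sgen r r := by
  simp only [rgen, rword, hr.ne', lt_irrefl, if_false, CoxeterSystem.wordProd_cons,
    CoxeterSystem.wordProd_nil, mul_one, ← mul_assoc]
  rfl

theorem rgen_inv {i : ℕ} (hi : 0 < i) (hir : i < r) : (rgen r i)⁻¹ = rgen r i := by
  rw [rgen_of_pos_of_lt hi hir, mul_inv_rev, sgen, sgen, CoxeterSystem.inv_simple,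
    CoxeterSystem.inv_simple]
  exact (sgen_commute (by omega) (by omega) (by omega)).eq.symm

theorem rgen_commute {i j : ℕ} (hij : i + 2 ≤ j) (hjr : j ≤ r) :
    Commute (rgen r i) (rgen r j) := by
  rcases Nat.eq_zero_or_pos i with rfl | hi <;> rcases hjr.lt_or_eq with hj | rfl <;>
    simp (disch := omega) only [rgen_zero, rgen_of_pos_of_lt, rgen_self] <;>
    repeat' first | apply Commute.mul_left | apply Commute.mul_right | apply sgen_commute
  all_goals omega

theorem rgen_braid {j : ℕ} (hj : 0 < j) (hjr : j + 2 ≤ r) :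
    rgen r j * rgen r (j + 1) * rgen r j = rgen r (j + 1) * rgen r j * rgen r (j + 1) := by
  rw [rgen_of_pos_of_lt hj (by omega), rgen_of_pos_of_lt (by omega) (by omega),
    show 2 * r + 1 - j = 2 * r - j + 1 by omega, show 2 * r + 1 - (j + 1) = 2 * r - j by omega]
  exact braid_mul_of_commute (sgen_commute (by omega) (by omega) (by omega))
    (sgen_commute (by omega) (by omega) (by omega)) (sgen_commute (by omega) (by omega) (by omega))
    (sgen_commute (by omega) (by omega) (by omega)) (sgen_braid (by omega))
    (sgen_braid (by omega)).symm

end Relations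

section Blocks

variable {r : ℕ}

theorem wordProd_flatten_map_rword (l : List ℕ) :
    (affCS r).wordProd (l.map (rword r)).flatten = (l.map (rgen r)).prod := by
  simp only [CoxeterSystem.wordProd, List.map_flatten, List.prod_flatten, List.map_map]
  rfl

theorem blockEl_eq_prod (k : ℕ) :
    blockEl r k = ((ascSeq 0 r ++ descSeq k (r - 1)).map (rgen r)).prod :=
  wordProd_flatten_map_rword _

theorem piEl_eq_pow (k : ℕ) : piEl r k = blockEl r k ^ k := by
  simp [piEl, piWord, blockEl, CoxeterSystem.wordProd, List.map_flatten, List.prod_flatten,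
    List.map_replicate, List.prod_replicate]

theorem blockEl_eq_mul_prod_descSeq {a b : ℕ} (ha : 0 < a) (hab : a ≤ b) (hbr : b ≤ r) :
    blockEl r a = blockEl r b * ((descSeq a (b - 1)).map (rgen r)).prod := by
  have hdesc : descSeq a (r - 1) = descSeq b (r - 1) ++ descSeq a (b - 1) := by
    rw [descSeq, descSeq, descSeq, ← List.reverse_append,
      show r - 1 + 1 - a = (b - a) + (r - b) by omega, show b - 1 + 1 - a = b - a by omega,
      show r - 1 + 1 - b = r - b by omega, ← List.range'_append_1, Nat.add_sub_cancel' hab]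
  rw [blockEl_eq_prod, blockEl_eq_prod, hdesc, ← List.append_assoc, List.map_append,
    List.prod_append]

theorem prod_map_rgen_descSeq {a b : ℕ} (ha : 0 < a) (hbr : b < r) :
    ((descSeq a b).map (rgen r)).prod = ((ascSeq a b).map (rgen r)).prod⁻¹ := by
  rw [List.prod_inv_reverse, List.map_map, ← List.map_reverse]
  refine congrArg List.prod (List.map_congr_left fun e he => ?_)
  rw [descSeq, List.mem_reverse, List.mem_range'_1] at he
  exact (rgen_inv (by omega) (by omega)).symm

theorem blockEl_semiconjBy {k j : ℕ} (hj : 0 < j) (hjk : j + 2 ≤ k) (hkr : k ≤ r) :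
    SemiconjBy (blockEl r k) (rgen r j) (rgen r (j + 1)) := by
  have hasc :
      ascSeq 0 r = List.range' 0 j ++ j :: (j + 1) :: List.range' (j + 2) (r - 1 - j) := by
    rw [ascSeq, show r + 1 - 0 = j + (r - 1 - j + 2) by omega, ← List.range'_append_1,
      Nat.zero_add]
    rfl
  have hsplit : ascSeq 0 r ++ descSeq k (r - 1) = List.range' 0 j ++
      j :: (j + 1) :: (List.range' (j + 2) (r - 1 - j) ++ descSeq k (r - 1)) := by
    simp [hasc]
  rw [blockEl_eq_prod, hsplit, List.map_append, List.prod_append, List.map_cons, List.map_cons,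
    List.prod_cons, List.prod_cons]
  refine semiconjBy_of_braid ?_ ?_ (rgen_braid hj (by omega))
  · refine Commute.list_prod_left _ _ (List.forall_mem_map.2 fun e he => ?_)
    rw [List.mem_range'_1] at he
    exact rgen_commute (by omega) (by omega)
  · refine Commute.list_prod_left _ _ (List.forall_mem_map.2 fun e he => ?_)
    rw [List.mem_append, List.mem_range'_1, descSeq, List.mem_reverse, List.mem_range'_1] at he
    exact (rgen_commute (by omega) (by omega)).symm

end Blocks

theorem statement2_general (r k : ℕ) (hk1 : 2 ≤ k) (hk2 : k ≤ r) :
    piEl r k =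
      piEl r (k - 1) * ((descSeq 1 (k - 1)).map (rgen r)).prod * piEl r 1 *
        ((ascSeq 1 (k - 1)).map (rgen r)).prod := by
  obtain ⟨m, rfl⟩ : ∃ m, k = m + 2 := ⟨k - 2, by omega⟩
  rw [show m + 2 - 1 = m + 1 by omega]
  set B := blockEl r (m + 2)
  set A := ((ascSeq 1 (m + 1)).map (rgen r)).prod
  have hB : ∀ j, 1 ≤ j → j < m + 1 → SemiconjBy B (rgen r j) (rgen r (j + 1)) :=
    fun j h1 h2 => blockEl_semiconjBy h1 (by omega) hk2
  have hD : ((descSeq 1 (m + 1)).map (rgen r)).prod = A⁻¹ :=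
    prod_map_rgen_descSeq one_pos (by omega)
  have hk : piEl r (m + 2) = B ^ (m + 2) := piEl_eq_pow _
  have hpred : piEl r (m + 1) = B ^ (m + 1) * A := by
    rw [piEl_eq_pow, blockEl_eq_mul_prod_descSeq (b := m + 2) (by omega) (by omega) hk2,
      show descSeq (m + 1) (m + 2 - 1) = [m + 1] by simp [descSeq], List.map_singleton,
      List.prod_singleton]
    exact mul_pow_succ_eq_pow_mul_prod_range' hB
  have hone : piEl r 1 = B * A⁻¹ := by
    rw [piEl_eq_pow, pow_one, blockEl_eq_mul_prod_descSeq (b := m + 2) one_pos (by omega) hk2,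
      show m + 2 - 1 = m + 1 from rfl, hD]
  rw [hk, hpred, hone, hD]
  group

/-- For `2 ≤ k ≤ r`, the recursion
`ϖ_k = ϖ_{k-1} · (r_{k-1} r_{k-2} ⋯ r_1) · ϖ_1 · (r_1 r_2 ⋯ r_{k-1})` holds in `W`,
where `ϖ_1 = r_0 r_1 ⋯ r_{r-1} r_r r_{r-1} ⋯ r_1`. -/
theorem statement2 (r k : ℕ) (hr : 1 ≤ r) (hk1 : 2 ≤ k) (hk2 : k ≤ r) :
    piEl r k =
      piEl r (k - 1) * ((descSeq 1 (k - 1)).map (rgen r)).prod * piEl r 1 *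
        ((ascSeq 1 (k - 1)).map (rgen r)).prod :=
  statement2_general r k hk1 hk2
end
end

section
/- For all k₁, k₂, l ∈ ℤ the following identity holds: 𝕊(k₁, k₂+1 | l) + 𝕊(k₁+1, k₂ | l) − (v + v^{-1}) · 𝕊(k₁+1, k₂+1 | l−1) = 0. -/
noncomputable section

/-- The variable `v`, a transcendental generator of the field `F = ℚ(v)` of rational
functions over `ℚ`. -/
def vv : RatFunc ℚ := RatFunc.X

/-- The `q`-deformed commutator `[x, y]_q = x·y − q·(y·x)`. -/
def qcomm {A : Type*} [Ring A] [Algebra (RatFunc ℚ) A] (q : RatFunc ℚ) (x y : A) : A :=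
  x * y - q • (y * x)

/-- The symmetrized Serre-type expression
`𝕊(k₁, k₂ | l) = Sym_{k₁,k₂} (x_{k₁} x_{k₂} y_l − [2] x_{k₁} y_l x_{k₂} + y_l x_{k₁} x_{k₂})`,
where `[2] = v + v⁻¹`. -/
def Ssym {A : Type*} [Ring A] [Algebra (RatFunc ℚ) A] (x y : ℤ → A) (k₁ k₂ l : ℤ) : A :=
  (x k₁ * x k₂ * y l - (vv + vv⁻¹) • (x k₁ * y l * x k₂) + y l * x k₁ * x k₂) +
    (x k₂ * x k₁ * y l - (vv + vv⁻¹) • (x k₂ * y l * x k₁) + y l * x k₂ * x k₁)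

/-! The left-hand side is an explicit element of the two-sided ideal generated by one instance
of relation (i) and two instances of relation (ii), with coefficients in `ℤ[v, v⁻¹]`; checking
this amounts to comparing the coefficients of the cubic monomials on both sides. -/

section SerreCombination

variable {R A : Type*} [Field R] [Ring A] [Algebra R A]

def qBracket (q : R) (a b : A) : A :=
  a * b - q • (b * a)

def serreSym (c : R) (a b u : A) : A :=
  (a * b * u - c • (a * u * b) + u * a * b) + (b * a * u - c • (b * u * a) + u * b * a)

theorem serreSym_shift_identity (v : R) (hv : v ≠ 0) (a b a' b' u z : A) :
    serreSym (v + v⁻¹) a b' u + serreSym (v + v⁻¹) a' b u -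
        (v + v⁻¹) • serreSym (v + v⁻¹) a' b' z =
      let P := qBracket (v⁻¹ ^ 2) a b' - v⁻¹ ^ 2 • qBracket (v ^ 2) a' b
      let Qa := qBracket v a u - v • qBracket v⁻¹ a' z
      let Qb := qBracket v b u - v • qBracket v⁻¹ b' z
      P * u - v ^ 2 • (u * P) + (1 + v⁻¹ ^ 2) • (b' * Qa + a' * Qb) -
        (v + v⁻¹) • (Qa * b' + Qb * a') := by
  simp only [serreSym, qBracket, mul_add, add_mul, mul_sub, sub_mul, smul_mul_assoc,
    mul_smul_comm, smul_smul, smul_add, smul_sub, mul_assoc]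
  match_scalars <;> field_simp <;> ring

theorem serreSym_shift_eq_zero {v : R} (hv : v ≠ 0) {a b a' b' u z : A}
    (hab : qBracket (v⁻¹ ^ 2) a b' - v⁻¹ ^ 2 • qBracket (v ^ 2) a' b = 0)
    (hau : qBracket v a u - v • qBracket v⁻¹ a' z = 0)
    (hbu : qBracket v b u - v • qBracket v⁻¹ b' z = 0) :
    serreSym (v + v⁻¹) a b' u + serreSym (v + v⁻¹) a' b u -
      (v + v⁻¹) • serreSym (v + v⁻¹) a' b' z = 0 := by
  rw [serreSym_shift_identity v hv]
  simp only [hab, hau, hbu, zero_mul, mul_zero, smul_zero, add_zero, sub_zero]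

end SerreCombination

theorem statement15_general {A : Type*} [Ring A] [Algebra (RatFunc ℚ) A] (x y : ℤ → A)
    (hxx : ∀ k l : ℤ,
      qcomm (vv⁻¹ ^ 2) (x k) (x (l + 1)) - (vv⁻¹ ^ 2) • qcomm (vv ^ 2) (x (k + 1)) (x l) = 0)
    (hxy : ∀ k l : ℤ,
      qcomm vv (x k) (y (l + 1)) - vv • qcomm vv⁻¹ (x (k + 1)) (y l) = 0)
    (k₁ k₂ l : ℤ) :
    Ssym x y k₁ (k₂ + 1) l + Ssym x y (k₁ + 1) k₂ l -
      (vv + vv⁻¹) • Ssym x y (k₁ + 1) (k₂ + 1) (l - 1) = 0 := by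
  have hxy' (k : ℤ) : qcomm vv (x k) (y l) - vv • qcomm vv⁻¹ (x (k + 1)) (y (l - 1)) = 0 := by
    simpa using hxy k (l - 1)
  exact serreSym_shift_eq_zero RatFunc.X_ne_zero (hxx k₁ k₂) (hxy' k₁) (hxy' k₂)

/-- `𝕊(k₁, k₂+1 | l) + 𝕊(k₁+1, k₂ | l) − (v+v⁻¹)·𝕊(k₁+1, k₂+1 | l−1) = 0`. -/
theorem statement15 {A : Type*} [Ring A] [Algebra (RatFunc ℚ) A] (x y : ℤ → A)
    (hxx : ∀ k l : ℤ,
      qcomm (vv⁻¹ ^ 2) (x k) (x (l + 1)) - (vv⁻¹ ^ 2) • qcomm (vv ^ 2) (x (k + 1)) (x l) = 0)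
    (hxy : ∀ k l : ℤ,
      qcomm vv (x k) (y (l + 1)) - vv • qcomm vv⁻¹ (x (k + 1)) (y l) = 0)
    (hyx : ∀ k l : ℤ,
      qcomm vv (y k) (x (l + 1)) - vv • qcomm vv⁻¹ (y (k + 1)) (x l) = 0)
    (k₁ k₂ l : ℤ) :
    Ssym x y k₁ (k₂ + 1) l + Ssym x y (k₁ + 1) k₂ l -
      (vv + vv⁻¹) • Ssym x y (k₁ + 1) (k₂ + 1) (l - 1) = 0 :=
  statement15_general x y hxx hxy k₁ k₂ l
end
end
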